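/- arXiv:2506.02146 — 2 statements merged into one kernel-verified Lean document; each statement's English description precedes it below -/
import Mathlib

section
/- Let θ ∈ (0, π/2]. Suppose Ω ⊂ ℝ²₊ = {(x₁,x₂) : x₁ > 0} is a dilation-invariant open set (λΩ = Ω for all λ > 0) whose boundary in the open half-plane consists of finitely many rays from the origin, and whose associated density Θ_V(0) := lim_{r→∞} [H¹(∂Ω ∩ ℝ²₊ ∩ B_r) − cos θ · H¹(∂Ω ∩ {x₁=0} ∩ B_r)]/(2r) satisfies Θ_V(0) ≤ (1 − cos θ)/2. Then either Ω = ∅, Ω = ℝ²₊, or ∂Ω ∩ ℝ²₊ is a single ray. -/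
open MeasureTheory Metric Set Pointwise
open scoped ENNReal NNReal

noncomputable section

namespace Stmt12Aux

abbrev E := EuclideanSpace ℝ (Fin 2)

lemma isometry_smul (d : E) (hd : ‖d‖ = 1) : Isometry (fun t : ℝ => t • d) := by
  apply Isometry.of_dist_eq
  intro a b
  simp [dist_eq_norm, ← sub_smul, norm_smul, hd]

lemma ray_inter_ball (d : E) (hd : ‖d‖ = 1) (r : ℝ) :
    {x : E | ∃ t : ℝ, 0 < t ∧ x = t • d} ∩ ball 0 r
      = (fun t : ℝ => t • d) '' Ioo 0 r := by
  ext x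
  constructor
  · rintro ⟨⟨t, ht, rfl⟩, hx⟩
    refine ⟨t, ⟨ht, ?_⟩, rfl⟩
    have h : ‖t • d‖ < r := by simpa [mem_ball, dist_eq_norm] using hx
    rwa [norm_smul, hd, mul_one, Real.norm_eq_abs, abs_of_pos ht] at h
  · rintro ⟨t, ⟨ht0, htr⟩, rfl⟩
    exact ⟨⟨t, ht0, rfl⟩, by
      simp [mem_ball, dist_eq_norm, norm_smul, hd, abs_of_pos ht0, htr]⟩

lemma hm_image (d : E) (hd : ‖d‖ = 1) (s : Set ℝ) :
    μH[(1:ℝ)] ((fun t : ℝ => t • d) '' s) = volume s := by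
  rw [(isometry_smul d hd).hausdorffMeasure_image (Or.inl one_pos.le),
    MeasureTheory.hausdorffMeasure_real]

lemma ray_measure (d : E) (hd : ‖d‖ = 1) (r : ℝ) :
    μH[(1:ℝ)] ({x : E | ∃ t : ℝ, 0 < t ∧ x = t • d} ∩ ball 0 r)
      = ENNReal.ofReal r := by
  rw [ray_inter_ball d hd, hm_image d hd, Real.volume_Ioo, sub_zero]

lemma ray_measurable (d : E) (hd : ‖d‖ = 1) (r : ℝ) :
    MeasurableSet ({x : E | ∃ t : ℝ, 0 < t ∧ x = t • d} ∩ ball 0 r) := by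
  rw [ray_inter_ball d hd]
  exact measurableSet_Ioo.image_of_continuousOn_injOn
    (isometry_smul d hd).continuous.continuousOn
    ((isometry_smul d hd).injective.injOn)

lemma wet_le (r : ℝ) (hr : 0 < r) :
    μH[(1:ℝ)] ({x : E | x 0 = 0} ∩ ball 0 r) ≤ ENNReal.ofReal (2 * r) := by
  set e : E := EuclideanSpace.single 1 (1:ℝ) with he_def
  have he : ‖e‖ = 1 := by simp [he_def]
  have hsub : {x : E | x 0 = 0} ∩ ball 0 r ⊆ (fun t : ℝ => t • e) '' Ioo (-r) r := by
    rintro x ⟨hx0, hxb⟩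
    have hx : x = (x 1) • e := by
      ext i
      have e0 : e 0 = 0 := by simp [he_def, EuclideanSpace.single_apply]
      have e1 : e 1 = (1:ℝ) := by simp [he_def, EuclideanSpace.single_apply]
      fin_cases i <;>
        simp_all [PiLp.smul_apply, smul_eq_mul]
    refine ⟨x 1, ?_, hx.symm⟩
    have hn : ‖x‖ < r := by simpa [mem_ball, dist_eq_norm] using hxb
    rw [hx] at hn
    rw [norm_smul, he, mul_one, Real.norm_eq_abs] at hn
    exact abs_lt.mp hn
  calc μH[(1:ℝ)] ({x : E | x 0 = 0} ∩ ball 0 r)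
      ≤ μH[(1:ℝ)] ((fun t : ℝ => t • e) '' Ioo (-r) r) := measure_mono hsub
    _ = ENNReal.ofReal (2 * r) := by
        rw [hm_image e he, Real.volume_Ioo]; ring_nf

end Stmt12Aux


/-- base case `n = 1` of the cone classification: a dilation-invariant set
in the half-plane whose boundary consists of finitely many rays and whose capillary density
is at most `(1 - cos θ)/2` is either empty, the whole half-plane, or bounded by one ray. -/
theorem stmt_12 (θ : ℝ) (hθ : θ ∈ Set.Ioc 0 (Real.pi / 2))
    (Ω : Set (EuclideanSpace ℝ (Fin 2))) (hopen : IsOpen Ω)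
    (hhalf : Ω ⊆ {x | 0 < x 0})
    (hdil : ∀ lam : ℝ, 0 < lam → lam • Ω = Ω)
    (D : Finset (EuclideanSpace ℝ (Fin 2)))
    (hD : ∀ d ∈ D, ‖d‖ = 1 ∧ 0 < d 0)
    (hrays : frontier Ω ∩ {x | 0 < x 0} = ⋃ d ∈ D, {x | ∃ t : ℝ, 0 < t ∧ x = t • d})
    (Θ : ℝ)
    (hΘ : Filter.Tendsto (fun r : ℝ =>
        ((μH[(1 : ℝ)] (frontier Ω ∩ {x | 0 < x 0} ∩ ball 0 r)).toReal
          - Real.cos θ * (μH[(1 : ℝ)] (frontier Ω ∩ {x | x 0 = 0} ∩ ball 0 r)).toReal)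
          / (2 * r)) Filter.atTop (nhds Θ))
    (hbound : Θ ≤ (1 - Real.cos θ) / 2) :
    Ω = ∅ ∨ Ω = {x | 0 < x 0}
    ∨ ∃ d : EuclideanSpace ℝ (Fin 2),
        frontier Ω ∩ {x | 0 < x 0} = {x | ∃ t : ℝ, 0 < t ∧ x = t • d} := by
  classical
  set c := Real.cos θ with hc_def
  have hc0 : 0 ≤ c := Real.cos_nonneg_of_mem_Icc ⟨by linarith [hθ.1, Real.pi_pos], hθ.2⟩
  have hc1 : c < 1 := by
    have := Real.cos_lt_cos_of_nonneg_of_le_pi (le_refl (0:ℝ))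
      (le_trans hθ.2 (by linarith [Real.pi_pos])) hθ.1
    simpa using this
  -- pairwise disjointness of the rays intersected with a ball
  have hdisj : ∀ r : ℝ, (↑D : Set (EuclideanSpace ℝ (Fin 2))).PairwiseDisjoint
      (fun d => {x : EuclideanSpace ℝ (Fin 2) | ∃ t : ℝ, 0 < t ∧ x = t • d} ∩ ball 0 r) := by
    intro r a ha b hb hab
    apply Set.disjoint_left.mpr
    rintro x ⟨⟨t, ht, rfl⟩, -⟩ ⟨⟨s, hs, heq⟩, -⟩
    have hna : ‖a‖ = 1 := (hD a ha).1
    have hnb : ‖b‖ = 1 := (hD b hb).1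
    have hts : t = s := by
      have h := congrArg norm heq
      rw [norm_smul, norm_smul, hna, hnb, mul_one, mul_one,
        Real.norm_eq_abs, Real.norm_eq_abs, abs_of_pos ht, abs_of_pos hs] at h
      exact h
    subst hts
    exact hab (smul_right_injective _ ht.ne' heq)
  -- the measure of the dry boundary in a ball
  have hA : ∀ r : ℝ, μH[(1:ℝ)] (frontier Ω ∩ {x | 0 < x 0} ∩ ball 0 r)
      = (D.card : ℝ≥0∞) * ENNReal.ofReal r := by
    intro r
    rw [hrays, Set.iUnion₂_inter,
      measure_biUnion_finset (hdisj r) (fun d hd => Stmt12Aux.ray_measurable d (hD d hd).1 r)]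
    rw [Finset.sum_congr rfl (fun d hd => Stmt12Aux.ray_measure d (hD d hd).1 r)]
    simp [mul_comm]
  -- lower bound on the quotient
  have hlow : ∀ r : ℝ, 1 ≤ r → (D.card : ℝ) / 2 - c ≤
      ((μH[(1 : ℝ)] (frontier Ω ∩ {x | 0 < x 0} ∩ ball 0 r)).toReal
          - c * (μH[(1 : ℝ)] (frontier Ω ∩ {x | x 0 = 0} ∩ ball 0 r)).toReal)
          / (2 * r) := by
    intro r hr
    have hr0 : (0:ℝ) < r := lt_of_lt_of_le one_pos hr
    have hAe : (μH[(1:ℝ)] (frontier Ω ∩ {x | 0 < x 0} ∩ ball 0 r)).toReal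
        = (D.card : ℝ) * r := by
      rw [hA r, ENNReal.toReal_mul]
      simp [ENNReal.toReal_ofReal hr0.le]
    set B := (μH[(1 : ℝ)] (frontier Ω ∩ {x | x 0 = 0} ∩ ball 0 r)).toReal with hB_def
    have hB0 : 0 ≤ B := ENNReal.toReal_nonneg
    have hBle : B ≤ 2 * r := by
      refine ENNReal.toReal_le_of_le_ofReal (by positivity) ?_
      refine le_trans (measure_mono ?_) (Stmt12Aux.wet_le r hr0)
      exact Set.inter_subset_inter_left _ (Set.inter_subset_right)
    have h1 : c * B ≤ c * (2 * r) := mul_le_mul_of_nonneg_left hBle hc0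
    rw [hAe, le_div_iff₀ (by positivity : (0:ℝ) < 2 * r)]
    nlinarith [h1]
  have hΘlow : (D.card : ℝ) / 2 - c ≤ Θ :=
    ge_of_tendsto hΘ (Filter.eventually_atTop.mpr ⟨1, hlow⟩)
  have hcard : D.card ≤ 1 := by
    have h2 : (D.card : ℝ) < 2 := by
      have : (D.card : ℝ) / 2 - c ≤ (1 - c) / 2 := le_trans hΘlow hbound
      linarith
    exact_mod_cast Nat.lt_succ_iff.mp (by exact_mod_cast h2 : D.card < 2)
  interval_cases h : D.card
  · -- no rays : Ω is clopen inside the connected half-plane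
    have hDempty : D = ∅ := Finset.card_eq_zero.mp h
    have hfr : frontier Ω ∩ {x : EuclideanSpace ℝ (Fin 2) | 0 < x 0} = ∅ := by
      rw [hrays, hDempty]; simp
    by_cases hne : Ω = ∅
    · exact Or.inl hne
    by_cases hfull : Ω = {x : EuclideanSpace ℝ (Fin 2) | 0 < x 0}
    · exact Or.inr (Or.inl hfull)
    exfalso
    have hH : IsPreconnected {x : EuclideanSpace ℝ (Fin 2) | 0 < x 0} := by
      have hlin : IsLinearMap ℝ (fun x : EuclideanSpace ℝ (Fin 2) => x 0) :=
        ⟨fun a b => rfl, fun c x => rfl⟩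
      exact (convex_halfSpace_gt hlin 0).isPreconnected
    have hnotcl : ∀ x ∈ {x : EuclideanSpace ℝ (Fin 2) | 0 < x 0}, x ∉ Ω → x ∉ closure Ω := by
      intro x hx hxΩ hxcl
      have : x ∈ frontier Ω := ⟨hxcl, by rwa [hopen.interior_eq]⟩
      exact absurd (Set.mem_inter this hx) (by rw [hfr]; exact fun hh => hh)
    obtain ⟨x0, hx0⟩ := Set.nonempty_iff_ne_empty.mpr hne
    obtain ⟨x1, hx1H, hx1⟩ : ∃ x, x ∈ {x : EuclideanSpace ℝ (Fin 2) | 0 < x 0} ∧ x ∉ Ω := by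
      by_contra hcon
      push_neg at hcon
      exact hfull (Set.Subset.antisymm hhalf hcon)
    have hres := hH Ω (closure Ω)ᶜ hopen (isClosed_closure.isOpen_compl)
      (fun x hx => by
        by_cases hxΩ : x ∈ Ω
        · exact Or.inl hxΩ
        · exact Or.inr (hnotcl x hx hxΩ))
      ⟨x0, hhalf hx0, hx0⟩
      ⟨x1, hx1H, hnotcl x1 hx1H hx1⟩
    obtain ⟨y, -, hy1, hy2⟩ := hres
    exact hy2 (subset_closure hy1)
  · -- exactly one ray
    obtain ⟨d, hDd⟩ := Finset.card_eq_one.mp h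
    refine Or.inr (Or.inr ⟨d, ?_⟩)
    rw [hrays, hDd]
    simp
end
end

section
/- Let u_i : B₁ⁿ → ℝ be Lipschitz functions with |u_i| + |Du_i| ≤ Γ θ_i pointwise, where θ_i → 0⁺ and Γ > 0 fixed. Suppose θ_i^{-1} u_i → v in C⁰_loc(B₁) and in W^{1,2}_loc(B₁), and that the sets {u_i > 0} converge to {v > 0} in the sense that 1_{{u_i>0}} → 1_{{v>0}} in L¹_loc(B₁). Let ζ : ℝ → ℝ be smooth with compact support in (−∞,1] and ζ ≡ 1 near 0, let x_i → x ∈ B₁ⁿ and r_i → r ∈ (0, 1−|x|). Then (2/θ_i²) ∫_{{u_i>0}} ζ(|y−x_i|/r_i)(√(1+|Du_i|²) − cos θ_i) dy → ∫_{{v>0}} ζ(|y−x|/r)(|Dv|² + 1) dy. -/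
open MeasureTheory Metric Set Filter

private lemma abs_add3 (a b c : ℝ) : |a + b + c| ≤ |a| + |b| + |c| :=
  (abs_add_le _ _).trans (by linarith [abs_add_le a b])

private lemma aux_sqrt {p : ℝ} (hp0 : 0 ≤ p) (hp1 : p ≤ 1) :
    |Real.sqrt (1 + p ^ 2) - (1 + p ^ 2 / 2)| ≤ p ^ 4 / 8 := by
  have hs := Real.sq_sqrt (show (0:ℝ) ≤ 1 + p ^ 2 by positivity)
  have hnn := Real.sqrt_nonneg (1 + p ^ 2)
  have h1 : Real.sqrt (1 + p ^ 2) ≤ 1 + p ^ 2 / 2 := by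
    nlinarith [sq_nonneg (Real.sqrt (1 + p ^ 2) - (1 + p ^ 2 / 2)), sq_nonneg p]
  have h2 : 1 + p ^ 2 / 2 - p ^ 4 / 8 ≤ Real.sqrt (1 + p ^ 2) := by
    have hp4 : p ^ 4 ≤ 1 := pow_le_one₀ hp0 hp1
    have hc : (0:ℝ) ≤ 1 + p ^ 2 / 2 - p ^ 4 / 8 := by nlinarith
    rw [Real.le_sqrt hc (by positivity)]
    nlinarith [mul_nonneg (pow_nonneg hp0 6) (show (0:ℝ) ≤ 8 - p ^ 2 by nlinarith [sq_nonneg p])]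
  rw [abs_le]; constructor <;> linarith

private lemma aux_l2_l1 {α : Type*} [MeasurableSpace α] (μ : Measure α) [IsFiniteMeasure μ]
    (f : ℕ → α → ℝ) (hnn : ∀ i y, 0 ≤ f i y)
    (hint : ∀ i, Integrable (f i) μ) (hint2 : ∀ i, Integrable (fun y => f i y ^ 2) μ)
    (h2 : Tendsto (fun i => ∫ y, f i y ^ 2 ∂μ) atTop (nhds 0)) :
    Tendsto (fun i => ∫ y, f i y ∂μ) atTop (nhds 0) := by
  rw [Metric.tendsto_atTop] at h2 ⊢
  intro ε hε
  set m := (μ Set.univ).toReal with hm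
  have hm0 : 0 ≤ m := ENNReal.toReal_nonneg
  set ε' : ℝ := ε / (2 * (m + 1)) with hε'
  have hε'pos : 0 < ε' := by positivity
  obtain ⟨N, hN⟩ := h2 (ε' * (ε / 2)) (by positivity)
  refine ⟨N, fun i hi => ?_⟩
  have hiN := hN i hi
  rw [Real.dist_eq, sub_zero] at hiN ⊢
  have h2nn : 0 ≤ ∫ y, f i y ^ 2 ∂μ := integral_nonneg fun y => sq_nonneg _
  rw [abs_of_nonneg h2nn] at hiN
  rw [abs_of_nonneg (integral_nonneg fun y => hnn i y)]
  have key : ∫ y, f i y ∂μ ≤ ∫ y, (ε' + f i y ^ 2 / ε') ∂μ := by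
    apply integral_mono (hint i) ((integrable_const ε').add ((hint2 i).div_const ε'))
    intro y
    simp only [Pi.add_apply]
    rcases le_or_gt (f i y) ε' with h | h
    · have := div_nonneg (sq_nonneg (f i y)) hε'pos.le
      linarith
    · have : f i y ≤ f i y ^ 2 / ε' := by
        rw [le_div_iff₀ hε'pos]; nlinarith [hnn i y]
      linarith
  rw [integral_add (integrable_const _) ((hint2 i).div_const _), integral_const,
    integral_div] at key
  have hmle : m * ε' ≤ ε / 2 := by
    rw [hε', mul_div_assoc']
    rw [div_le_iff₀ (by positivity : (0:ℝ) < 2 * (m + 1))]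
    nlinarith
  have h2' : (∫ y, f i y ^ 2 ∂μ) / ε' < ε / 2 := by
    rw [div_lt_iff₀ hε'pos]
    calc ∫ y, f i y ^ 2 ∂μ < ε' * (ε / 2) := hiN
    _ = ε / 2 * ε' := by ring
  simp only [smul_eq_mul] at key
  calc ∫ y, f i y ∂μ ≤ m * ε' + (∫ y, f i y ^ 2 ∂μ) / ε' := key
  _ < ε / 2 + ε / 2 := add_lt_add_of_le_of_lt hmle h2'
  _ = ε := by ring


private lemma ptwise_bound {gvi gv Fv a b ng M es G Lds ci cv : ℝ}
    (hgi : |gvi| ≤ M) (hgv : |gv| ≤ M) (hgg : |gvi - gv| ≤ Lds)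
    (hF : |Fv - (a ^ 2 + 1)| ≤ es)
    (ha0 : 0 ≤ a) (hb0 : 0 ≤ b) (haG : a ≤ G) (hbG : b ≤ G)
    (habgap : |a - b| ≤ ng) (hng0 : 0 ≤ ng)
    (hM0 : 0 ≤ M) (hG0 : 0 ≤ G) (he0 : 0 ≤ es) (hL0 : 0 ≤ Lds)
    (hci : ci = 0 ∨ ci = 1) (hcv : cv = 0 ∨ cv = 1) :
    |ci * (gvi * Fv) - cv * (gv * (b ^ 2 + 1))|
      ≤ (M * es + (G ^ 2 + 1) * Lds) + (2 * G * M * ng + M * (G ^ 2 + 1) * |ci - cv|) := by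
  have hb1 : b ^ 2 + 1 ≤ G ^ 2 + 1 := by nlinarith
  have hb1' : (0:ℝ) ≤ b ^ 2 + 1 := by positivity
  have hnn1 : 0 ≤ M * es := mul_nonneg hM0 he0
  have hnn2 : 0 ≤ (G ^ 2 + 1) * Lds := mul_nonneg (by positivity) hL0
  have hnn3 : 0 ≤ 2 * G * M * ng := mul_nonneg (mul_nonneg (by linarith) hM0) hng0
  have hnn4 : 0 ≤ M * (G ^ 2 + 1) := mul_nonneg hM0 (by positivity)
  rcases hci with hci | hci <;> rcases hcv with hcv | hcv <;> subst hci <;> subst hcv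
  · -- 0, 0
    norm_num
    linarith
  · -- ci = 0, cv = 1
    have h1 : |(0:ℝ) * (gvi * Fv) - 1 * (gv * (b ^ 2 + 1))| = |gv| * (b ^ 2 + 1) := by
      rw [zero_mul, one_mul, zero_sub, abs_neg, abs_mul, abs_of_nonneg hb1']
    rw [h1]
    have h2 : |gv| * (b ^ 2 + 1) ≤ M * (G ^ 2 + 1) :=
      mul_le_mul hgv hb1 hb1' hM0
    have h3 : |(0:ℝ) - 1| = 1 := by norm_num
    rw [h3]
    linarith
  · -- ci = 1, cv = 0
    have h1 : |(1:ℝ) * (gvi * Fv) - 0 * (gv * (b ^ 2 + 1))| = |gvi| * |Fv| := by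
      rw [one_mul, zero_mul, sub_zero, abs_mul]
    rw [h1]
    have hFb : |Fv| ≤ es + (G ^ 2 + 1) := by
      have he : Fv - (a ^ 2 + 1) + (a ^ 2 + 1) = Fv := by ring
      have h2 : |Fv| ≤ |Fv - (a ^ 2 + 1)| + |a ^ 2 + 1| := by
        rw [← he]; exact (abs_add_le _ _).trans_eq (by rw [he])
      have h3 : |a ^ 2 + 1| = a ^ 2 + 1 := abs_of_nonneg (by positivity)
      nlinarith
    have h4 : |gvi| * |Fv| ≤ M * (es + (G ^ 2 + 1)) :=
      mul_le_mul hgi hFb (abs_nonneg _) hM0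
    have h3 : |(1:ℝ) - 0| = 1 := by norm_num
    rw [h3]
    nlinarith
  · -- 1, 1
    have h0 : |(1:ℝ) - 1| = 0 := by norm_num
    rw [h0, mul_zero, add_zero, one_mul, one_mul]
    have hdec : gvi * Fv - gv * (b ^ 2 + 1)
        = gvi * (Fv - (a ^ 2 + 1)) + gvi * (a ^ 2 - b ^ 2) + (gvi - gv) * (b ^ 2 + 1) := by
      ring
    rw [hdec]
    refine (abs_add3 _ _ _).trans ?_
    have habsq : |a ^ 2 - b ^ 2| ≤ 2 * G * ng := by
      have h1 : a ^ 2 - b ^ 2 = (a + b) * (a - b) := by ring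
      rw [h1, abs_mul, abs_of_nonneg (add_nonneg ha0 hb0)]
      calc (a + b) * |a - b| ≤ (2 * G) * ng :=
            mul_le_mul (by linarith) habgap (abs_nonneg _) (by linarith)
      _ = 2 * G * ng := by ring
    have t1 : |gvi * (Fv - (a ^ 2 + 1))| ≤ M * es := by
      rw [abs_mul]; exact mul_le_mul hgi hF (abs_nonneg _) hM0
    have t2 : |gvi * (a ^ 2 - b ^ 2)| ≤ 2 * G * M * ng := by
      rw [abs_mul]
      calc |gvi| * |a ^ 2 - b ^ 2| ≤ M * (2 * G * ng) :=
            mul_le_mul hgi habsq (abs_nonneg _) hM0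
      _ = 2 * G * M * ng := by ring
    have t3 : |(gvi - gv) * (b ^ 2 + 1)| ≤ (G ^ 2 + 1) * Lds := by
      rw [abs_mul, abs_of_nonneg hb1']
      calc |gvi - gv| * (b ^ 2 + 1) ≤ Lds * (G ^ 2 + 1) :=
            mul_le_mul hgg hb1 hb1' hL0
      _ = (G ^ 2 + 1) * Lds := by ring
    linarith

set_option maxHeartbeats 2000000 in
/-- convergence of the renormalized capillary energy integrand to the
Alt–Caffarelli integrand:
`(2/θᵢ²) ∫_{{uᵢ>0}} ζ(|y-xᵢ|/rᵢ)(√(1+|Duᵢ|²) - cos θᵢ) → ∫_{{v>0}} ζ(|y-x|/r)(|Dv|²+1)`. -/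
theorem stmt_13 (n : ℕ) (Γ : ℝ) (hΓ : 0 < Γ)
    (θ : ℕ → ℝ) (hθpos : ∀ i, 0 < θ i) (hθlim : Tendsto θ atTop (nhds 0))
    (u : ℕ → EuclideanSpace ℝ (Fin n) → ℝ) (v : EuclideanSpace ℝ (Fin n) → ℝ)
    (hu_lip : ∀ i, LipschitzWith (Real.toNNReal (Γ * θ i)) (u i))
    (hu_bd : ∀ i, ∀ y ∈ ball (0 : EuclideanSpace ℝ (Fin n)) 1,
      |u i y| + ‖fderiv ℝ (u i) y‖ ≤ Γ * θ i)
    (hC0 : TendstoLocallyUniformlyOn (fun i y => (θ i)⁻¹ * u i y) v atTop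
      (ball (0 : EuclideanSpace ℝ (Fin n)) 1))
    (hW12 : ∀ Kc : Set (EuclideanSpace ℝ (Fin n)), IsCompact Kc →
      Kc ⊆ ball (0 : EuclideanSpace ℝ (Fin n)) 1 →
      Tendsto (fun i => ∫ y in Kc, ‖(θ i)⁻¹ • fderiv ℝ (u i) y - fderiv ℝ v y‖ ^ 2)
        atTop (nhds 0))
    (hind : ∀ Kc : Set (EuclideanSpace ℝ (Fin n)), IsCompact Kc →
      Kc ⊆ ball (0 : EuclideanSpace ℝ (Fin n)) 1 →
      Tendsto (fun i => ∫ y in Kc,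
        |Set.indicator {y | 0 < u i y} (fun _ => (1:ℝ)) y
          - Set.indicator {y | 0 < v y} (fun _ => (1:ℝ)) y|) atTop (nhds 0))
    (ζ : ℝ → ℝ) (hζ_smooth : ContDiff ℝ (⊤ : ℕ∞) ζ) (hζ_supp : ∀ t, 1 < t → ζ t = 0)
    (hζ_one : ∃ δ : ℝ, 0 < δ ∧ ∀ t ≤ δ, ζ t = 1)
    (x : EuclideanSpace ℝ (Fin n)) (hx : x ∈ ball (0 : EuclideanSpace ℝ (Fin n)) 1)
    (xi : ℕ → EuclideanSpace ℝ (Fin n)) (hxi : Tendsto xi atTop (nhds x))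
    (r : ℝ) (hr : r ∈ Set.Ioo 0 (1 - ‖x‖)) (ri : ℕ → ℝ) (hri : Tendsto ri atTop (nhds r)) :
    Tendsto (fun i => (2 / (θ i) ^ 2) *
        ∫ y in {y | 0 < u i y} ∩ ball (0 : EuclideanSpace ℝ (Fin n)) 1,
          ζ (‖y - xi i‖ / ri i) * (Real.sqrt (1 + ‖fderiv ℝ (u i) y‖ ^ 2) - Real.cos (θ i)))
      atTop
      (nhds (∫ y in {y | 0 < v y} ∩ ball (0 : EuclideanSpace ℝ (Fin n)) 1,
        ζ (‖y - x‖ / r) * (‖fderiv ℝ v y‖ ^ 2 + 1))) := by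
  classical
  obtain ⟨δ, hδpos, hδone⟩ := hζ_one
  obtain ⟨hr0, hr1⟩ := hr
  have hx1 : ‖x‖ < 1 := by
    rw [mem_ball, dist_zero_right] at hx; exact hx
  -- geometry
  set ρ : ℝ := (r + (1 - ‖x‖)) / 2 with hρdef
  have hrρ : r < ρ := by rw [hρdef]; linarith
  have hρ1 : ρ < 1 - ‖x‖ := by rw [hρdef]; linarith
  have hρ0 : 0 < ρ := hr0.trans hrρ
  set ρ₁ : ℝ := (r + ρ) / 2 with hρ₁def
  have hrρ₁ : r < ρ₁ := by rw [hρ₁def]; linarith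
  have hρ₁ρ : ρ₁ < ρ := by rw [hρ₁def]; linarith
  set K : Set (EuclideanSpace ℝ (Fin n)) := closedBall x ρ with hKdef
  have hKc : IsCompact K := isCompact_closedBall x ρ
  have hKm : MeasurableSet K := measurableSet_closedBall
  have hKb : K ⊆ ball (0 : EuclideanSpace ℝ (Fin n)) 1 := by
    intro y hy
    rw [hKdef, mem_closedBall, dist_eq_norm] at hy
    rw [mem_ball, dist_zero_right]
    have h1 : ‖y‖ ≤ ‖y - x‖ + ‖x‖ := by
      simpa using norm_add_le (y - x) x
    linarith
  haveI : IsFiniteMeasure (volume.restrict K) :=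
    ⟨by rw [Measure.restrict_apply_univ]; exact hKc.measure_lt_top⟩
  set mK : ℝ := (volume K).toReal with hmKdef
  -- ζ is Lipschitz and bounded on [0, ∞)
  have hζdiff : Differentiable ℝ ζ := hζ_smooth.differentiable (by simp)
  have hζcont : Continuous ζ := hζ_smooth.continuous
  have hζderiv0 : ∀ t : ℝ, t < δ ∨ 1 < t → deriv ζ t = 0 := by
    intro t ht
    rcases ht with ht | ht
    · have hev : ζ =ᶠ[nhds t] fun _ => (1:ℝ) :=
        eventually_of_mem (Iio_mem_nhds ht) fun s hs => hδone s (le_of_lt hs)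
      rw [hev.deriv_eq]; exact deriv_const t 1
    · have hev : ζ =ᶠ[nhds t] fun _ => (0:ℝ) :=
        eventually_of_mem (Ioi_mem_nhds ht) fun s hs => hζ_supp s hs
      rw [hev.deriv_eq]; exact deriv_const t 0
  obtain ⟨C, hC⟩ := (isCompact_Icc (a := (0:ℝ)) (b := 2)).exists_bound_of_continuousOn
    ((hζ_smooth.continuous_deriv (by simp)).continuousOn)
  set Lr : ℝ := max C 0 with hLrdef
  have hLr0 : 0 ≤ Lr := le_max_right _ _
  have hζlip : LipschitzWith (Real.toNNReal Lr) ζ := by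
    apply lipschitzWith_of_nnnorm_deriv_le hζdiff
    intro t
    rw [← NNReal.coe_le_coe, coe_nnnorm, Real.coe_toNNReal _ hLr0]
    rcases le_or_gt t 2 with h2 | h2
    · rcases le_or_gt 0 t with h0 | h0
      · exact (hC t ⟨h0, h2⟩).trans (le_max_left _ _)
      · rw [hζderiv0 t (Or.inl (h0.trans hδpos))]
        simpa using hLr0
    · rw [hζderiv0 t (Or.inr (by linarith))]
      simpa using hLr0
  have hζlip' : ∀ s t : ℝ, |ζ s - ζ t| ≤ Lr * |s - t| := by
    intro s t
    have h := hζlip.dist_le_mul s t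
    rwa [Real.dist_eq, Real.dist_eq, Real.coe_toNNReal _ hLr0] at h
  set M : ℝ := Lr + 1 with hMdef
  have hM1 : (1:ℝ) ≤ M := by rw [hMdef]; linarith
  have hM0 : (0:ℝ) ≤ M := by linarith
  have hζbd : ∀ t : ℝ, 0 ≤ t → |ζ t| ≤ M := by
    intro t ht0
    rcases le_or_gt t 1 with ht1 | ht1
    · have h0 : ζ 0 = 1 := hδone 0 hδpos.le
      have h := hζlip' t 0
      rw [sub_zero, h0, abs_of_nonneg ht0] at h
      have he : ζ t - 1 + 1 = ζ t := by ring
      have habs : |ζ t| ≤ |ζ t - 1| + 1 := by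
        calc |ζ t| = |ζ t - 1 + 1| := by rw [he]
        _ ≤ |ζ t - 1| + |(1:ℝ)| := abs_add_le _ _
        _ = |ζ t - 1| + 1 := by norm_num
      have hLt : Lr * t ≤ Lr := by nlinarith
      rw [hMdef]; linarith
    · rw [hζ_supp t ht1]
      simpa using hM0
  -- v is Lipschitz on the unit ball, hence has bounded gradient there
  have hucont : ∀ i, Continuous (u i) := fun i => (hu_lip i).continuous
  have hulip' : ∀ (i : ℕ) (a b : EuclideanSpace ℝ (Fin n)),
      dist ((θ i)⁻¹ * u i a) ((θ i)⁻¹ * u i b) ≤ Γ * dist a b := by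
    intro i a b
    have h := (hu_lip i).dist_le_mul a b
    rw [Real.coe_toNNReal _ (mul_nonneg hΓ.le (hθpos i).le)] at h
    have hθi := hθpos i
    rw [Real.dist_eq, ← mul_sub, abs_mul, abs_of_pos (inv_pos.mpr hθi)]
    rw [Real.dist_eq] at h
    calc (θ i)⁻¹ * |u i a - u i b| ≤ (θ i)⁻¹ * (Γ * θ i * dist a b) :=
        mul_le_mul_of_nonneg_left h (by positivity)
    _ = Γ * dist a b := by field_simp
  have hvlip : LipschitzOnWith (Real.toNNReal Γ) v (ball (0:EuclideanSpace ℝ (Fin n)) 1) := by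
    apply LipschitzOnWith.of_dist_le_mul
    intro a ha b hb
    rw [Real.coe_toNNReal _ hΓ.le]
    have ta := hC0.tendsto_at ha
    have tb := hC0.tendsto_at hb
    exact le_of_tendsto (ta.dist tb) (Eventually.of_forall fun i => hulip' i a b)
  have hDv : ∀ y ∈ ball (0:EuclideanSpace ℝ (Fin n)) 1, ‖fderiv ℝ v y‖ ≤ Γ := by
    intro y hy
    have h := norm_fderiv_le_of_lipschitzOn ℝ (isOpen_ball.mem_nhds hy) hvlip
    rwa [Real.coe_toNNReal _ hΓ.le] at h
  have hvcont : ContinuousOn v (ball (0:EuclideanSpace ℝ (Fin n)) 1) :=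
    hC0.continuousOn (Frequently.of_forall fun i => (continuous_const.mul (hucont i)).continuousOn)
  set Sv : Set (EuclideanSpace ℝ (Fin n)) := {y | 0 < v y} ∩ ball 0 1 with hSvdef
  have hSv_open : IsOpen Sv := by
    have h := hvcont.isOpen_inter_preimage (t := Ioi (0:ℝ)) isOpen_ball isOpen_Ioi
    have he : Sv = ball (0:EuclideanSpace ℝ (Fin n)) 1 ∩ v ⁻¹' Ioi 0 := by
      rw [hSvdef]; ext y; simp [mem_inter_iff, mem_preimage, mem_Ioi, mem_setOf_eq]; tauto
    rw [he]; exact h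
  have hSv_meas : MeasurableSet Sv := hSv_open.measurableSet
  -- measurability facts
  have hSi_open : ∀ i, IsOpen {y | 0 < u i y} := fun i =>
    isOpen_lt continuous_const (hucont i)
  have hmes_Du : ∀ i, Measurable fun y => ‖fderiv ℝ (u i) y‖ :=
    fun i => (measurable_fderiv ℝ (u i)).norm
  have hmes_Dv : Measurable fun y => ‖fderiv ℝ v y‖ := (measurable_fderiv ℝ v).norm
  have hmes_wd : ∀ i, Measurable fun y =>
      ‖(θ i)⁻¹ • fderiv ℝ (u i) y - fderiv ℝ v y‖ :=
    fun i => (((measurable_fderiv ℝ (u i)).const_smul ((θ i)⁻¹)).sub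
      (measurable_fderiv ℝ v)).norm
  have hmes_F : ∀ i, Measurable fun y =>
      2 / θ i ^ 2 * (Real.sqrt (1 + ‖fderiv ℝ (u i) y‖ ^ 2) - Real.cos (θ i)) := by
    intro i
    apply Measurable.const_mul
    exact (Real.continuous_sqrt.measurable.comp (((hmes_Du i).pow_const 2).const_add 1)).sub
      measurable_const
  have hcont_gi : ∀ i, Continuous fun y : EuclideanSpace ℝ (Fin n) => ζ (‖y - xi i‖ / ri i) :=
    fun i => hζcont.comp (((continuous_id.sub continuous_const).norm).div_const _)
  have hcont_g : Continuous fun y : EuclideanSpace ℝ (Fin n) => ζ (‖y - x‖ / r) :=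
    hζcont.comp (((continuous_id.sub continuous_const).norm).div_const _)
  -- integrability helper
  have intK : ∀ (f : EuclideanSpace ℝ (Fin n) → ℝ) (Cb : ℝ),
      AEStronglyMeasurable f (volume.restrict K) → (∀ y ∈ K, |f y| ≤ Cb) →
      IntegrableOn f K := by
    intro f Cb hmf hbd
    refine Integrable.mono' (integrable_const Cb) hmf ?_
    rw [ae_restrict_iff' hKm]
    exact ae_of_all _ fun y hy => by simpa [Real.norm_eq_abs] using hbd y hy
  -- key functions
  set fT : EuclideanSpace ℝ (Fin n) → ℝ :=
    Sv.indicator (fun y => ζ (‖y - x‖ / r) * (‖fderiv ℝ v y‖ ^ 2 + 1)) with hfTdef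
  set fI : ℕ → EuclideanSpace ℝ (Fin n) → ℝ := fun i =>
    ({y | 0 < u i y}).indicator (fun y => ζ (‖y - xi i‖ / ri i) *
      (2 / θ i ^ 2 * (Real.sqrt (1 + ‖fderiv ℝ (u i) y‖ ^ 2) - Real.cos (θ i)))) with hfIdef
  set χi : ℕ → EuclideanSpace ℝ (Fin n) → ℝ :=
    fun i => ({y | 0 < u i y}).indicator (fun _ => (1:ℝ)) with hχidef
  set χv : EuclideanSpace ℝ (Fin n) → ℝ := Sv.indicator (fun _ => (1:ℝ)) with hχvdef
  set εs : ℕ → ℝ := fun i => (Γ ^ 4 / 4 + 5 / 48) * θ i ^ 2 with hεdef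
  set ds : ℕ → ℝ := fun i => (‖xi i - x‖ * r + ρ * |ri i - r|) * (2 / r ^ 2) with hddef
  have hεnn : ∀ i, 0 ≤ εs i := fun i => by simp only [hεdef]; positivity
  have hdnn : ∀ i, 0 ≤ ds i := fun i => by simp only [hddef]; positivity
  set I1 : ℕ → ℝ := fun i =>
    ∫ y in K, ‖(θ i)⁻¹ • fderiv ℝ (u i) y - fderiv ℝ v y‖ with hI1def
  set I2 : ℕ → ℝ := fun i => ∫ y in K, |χi i y - χv y| with hI2def
  set bnd : ℕ → ℝ := fun i => (M * εs i + (Γ ^ 2 + 1) * (Lr * ds i)) * mK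
    + (2 * Γ * M * I1 i + M * (Γ ^ 2 + 1) * I2 i) with hbnddef
  -- uniform gradient bounds on K
  have hwK : ∀ i, ∀ y ∈ K, ‖(θ i)⁻¹ • fderiv ℝ (u i) y‖ ≤ Γ := by
    intro i y hy
    have hθi := hθpos i
    have hp : ‖fderiv ℝ (u i) y‖ ≤ Γ * θ i :=
      le_trans (le_add_of_nonneg_left (abs_nonneg _)) (hu_bd i y (hKb hy))
    rw [norm_smul, norm_inv, Real.norm_eq_abs, abs_of_pos hθi, inv_mul_le_iff₀ hθi]
    calc ‖fderiv ℝ (u i) y‖ ≤ Γ * θ i := hp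
    _ = θ i * Γ := by ring
  have hDvK : ∀ y ∈ K, ‖fderiv ℝ v y‖ ≤ Γ := fun y hy => hDv y (hKb hy)
  -- integrability of the various integrands
  have int_fT : IntegrableOn fT K := by
    apply intK fT (M * (Γ ^ 2 + 1))
    · exact ((hcont_g.measurable.mul ((hmes_Dv.pow_const 2).add_const 1)).indicator
        hSv_meas).aestronglyMeasurable
    · intro y hy
      by_cases hyv : y ∈ Sv
      · simp only [hfTdef, indicator_of_mem hyv]
        rw [abs_mul, abs_of_nonneg (by positivity : (0:ℝ) ≤ ‖fderiv ℝ v y‖ ^ 2 + 1)]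
        have h1 : |ζ (‖y - x‖ / r)| ≤ M := hζbd _ (by positivity)
        have h2 : ‖fderiv ℝ v y‖ ^ 2 + 1 ≤ Γ ^ 2 + 1 := by
          nlinarith [hDvK y hy, norm_nonneg (fderiv ℝ v y)]
        exact mul_le_mul h1 h2 (by positivity) hM0
      · simp only [hfTdef, indicator_of_notMem hyv]
        rw [abs_zero]
        positivity
  have int_n : ∀ i, IntegrableOn
      (fun y => ‖(θ i)⁻¹ • fderiv ℝ (u i) y - fderiv ℝ v y‖) K := by
    intro i
    apply intK _ (2 * Γ) ((hmes_wd i).aestronglyMeasurable)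
    intro y hy
    rw [abs_of_nonneg (norm_nonneg _)]
    calc ‖(θ i)⁻¹ • fderiv ℝ (u i) y - fderiv ℝ v y‖
        ≤ ‖(θ i)⁻¹ • fderiv ℝ (u i) y‖ + ‖fderiv ℝ v y‖ := norm_sub_le _ _
    _ ≤ Γ + Γ := add_le_add (hwK i y hy) (hDvK y hy)
    _ = 2 * Γ := by ring
  have int_n2 : ∀ i, IntegrableOn
      (fun y => ‖(θ i)⁻¹ • fderiv ℝ (u i) y - fderiv ℝ v y‖ ^ 2) K := by
    intro i
    have hm2 : Measurable fun y => ‖(θ i)⁻¹ • fderiv ℝ (u i) y - fderiv ℝ v y‖ ^ 2 :=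
      (hmes_wd i).pow_const 2
    apply intK (fun y => ‖(θ i)⁻¹ • fderiv ℝ (u i) y - fderiv ℝ v y‖ ^ 2) ((2 * Γ) ^ 2)
      hm2.aestronglyMeasurable
    intro y hy
    rw [abs_of_nonneg (by positivity)]
    have h1 : ‖(θ i)⁻¹ • fderiv ℝ (u i) y - fderiv ℝ v y‖ ≤ 2 * Γ := by
      calc ‖(θ i)⁻¹ • fderiv ℝ (u i) y - fderiv ℝ v y‖
          ≤ ‖(θ i)⁻¹ • fderiv ℝ (u i) y‖ + ‖fderiv ℝ v y‖ := norm_sub_le _ _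
      _ ≤ Γ + Γ := add_le_add (hwK i y hy) (hDvK y hy)
      _ = 2 * Γ := by ring
    exact pow_le_pow_left₀ (norm_nonneg _) h1 2
  have int_χ : ∀ i, IntegrableOn (fun y => |χi i y - χv y|) K := by
    intro i
    apply intK _ 2
    · exact (((measurable_const.indicator (hSi_open i).measurableSet).sub
        (measurable_const.indicator hSv_meas)).abs).aestronglyMeasurable
    · intro y _
      rw [abs_abs]
      simp only [hχidef, hχvdef]
      have h1 : |({y_1 | 0 < u i y_1}).indicator (fun _ => (1:ℝ)) y| ≤ 1 := by
        rw [Set.indicator_apply]; split <;> norm_num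
      have h2 : |Sv.indicator (fun _ => (1:ℝ)) y| ≤ 1 := by
        rw [Set.indicator_apply]; split <;> norm_num
      calc |({y_1 | 0 < u i y_1}).indicator (fun _ => (1:ℝ)) y
            - Sv.indicator (fun _ => (1:ℝ)) y|
          ≤ |({y_1 | 0 < u i y_1}).indicator (fun _ => (1:ℝ)) y|
            + |Sv.indicator (fun _ => (1:ℝ)) y| := abs_sub _ _
      _ ≤ 2 := by linarith
  -- limits of the error terms
  have hI1lim : Tendsto I1 atTop (nhds 0) := by
    simp only [hI1def]
    exact aux_l2_l1 (volume.restrict K) _ (fun i y => norm_nonneg _) int_n int_n2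
      (hW12 K hKc hKb)
  have hI2lim : Tendsto I2 atTop (nhds 0) := by
    have h := hind K hKc hKb
    apply Tendsto.congr _ h
    intro i
    apply setIntegral_congr_fun hKm
    intro y hy
    simp only [hχidef, hχvdef]
    congr 1
    by_cases hv : 0 < v y
    · rw [indicator_of_mem (show y ∈ {z | 0 < v z} from hv),
        indicator_of_mem (show y ∈ Sv from ⟨hv, hKb hy⟩)]
    · rw [indicator_of_notMem (show y ∉ {z | 0 < v z} from hv),
        indicator_of_notMem (show y ∉ Sv from fun h => hv h.1)]
  have hεlim : Tendsto εs atTop (nhds 0) := by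
    simp only [hεdef]
    have h := (hθlim.pow 2).const_mul (Γ ^ 4 / 4 + 5 / 48)
    simpa using h
  have hnxlim : Tendsto (fun i => ‖xi i - x‖) atTop (nhds 0) :=
    tendsto_iff_norm_sub_tendsto_zero.mp hxi
  have hrlim : Tendsto (fun i => |ri i - r|) atTop (nhds 0) := by
    have h : Tendsto (fun i => ri i - r) atTop (nhds (r - r)) := hri.sub_const r
    rw [sub_self] at h
    simpa using h.abs
  have hdlim : Tendsto ds atTop (nhds 0) := by
    simp only [hddef]
    have h1 : Tendsto (fun i => ‖xi i - x‖ * r + ρ * |ri i - r|) atTop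
        (nhds (0 * r + ρ * 0)) := (hnxlim.mul_const r).add (hrlim.const_mul ρ)
    have h2 := h1.mul_const (2 / r ^ 2)
    simpa using h2
  have hbndlim : Tendsto bnd atTop (nhds 0) := by
    simp only [hbnddef]
    have h1 : Tendsto (fun i => M * εs i + (Γ ^ 2 + 1) * (Lr * ds i)) atTop
        (nhds (M * 0 + (Γ ^ 2 + 1) * (Lr * 0))) :=
      (hεlim.const_mul M).add ((hdlim.const_mul Lr).const_mul (Γ ^ 2 + 1))
    have h2 := (h1.mul_const mK).add
      ((hI1lim.const_mul (2 * Γ * M)).add (hI2lim.const_mul (M * (Γ ^ 2 + 1))))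
    simpa using h2
  -- the limit integral over K
  have eq2 : (∫ y in Sv, ζ (‖y - x‖ / r) * (‖fderiv ℝ v y‖ ^ 2 + 1))
      = ∫ y in K, fT y := by
    have h1 : (∫ y in Sv, ζ (‖y - x‖ / r) * (‖fderiv ℝ v y‖ ^ 2 + 1))
        = ∫ y in K ∩ Sv, ζ (‖y - x‖ / r) * (‖fderiv ℝ v y‖ ^ 2 + 1) := by
      refine setIntegral_eq_of_subset_of_ae_diff_eq_zero hSv_meas.nullMeasurableSet
        inter_subset_right (ae_of_all _ fun y hy => ?_)
      obtain ⟨hySv, hyK⟩ := hy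
      have hyK' : y ∉ K := fun h => hyK ⟨h, hySv⟩
      rw [hKdef, mem_closedBall, dist_eq_norm, not_le] at hyK'
      rw [hζ_supp _ ((one_lt_div hr0).mpr (by linarith)), zero_mul]
    rw [h1, hfTdef, setIntegral_indicator hSv_meas]
  rw [eq2, tendsto_iff_dist_tendsto_zero]
  refine squeeze_zero' (Eventually.of_forall fun i => dist_nonneg) ?_ hbndlim
  -- the eventual quantitative bound
  have hP : ∀ᶠ i in atTop, θ i ≤ 1 ∧ Γ * θ i ≤ 1 ∧ r / 2 < ri i ∧ ri i < ρ₁ ∧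
      ‖xi i - x‖ < ρ - ρ₁ := by
    have e1 : ∀ᶠ i in atTop, θ i < 1 := hθlim.eventually_lt_const one_pos
    have e2 : ∀ᶠ i in atTop, Γ * θ i < 1 := by
      have h : Tendsto (fun i => Γ * θ i) atTop (nhds (Γ * 0)) := hθlim.const_mul Γ
      rw [mul_zero] at h
      exact h.eventually_lt_const one_pos
    have e3 : ∀ᶠ i in atTop, r / 2 < ri i := hri.eventually_const_lt (by linarith)
    have e4 : ∀ᶠ i in atTop, ri i < ρ₁ := hri.eventually_lt_const hrρ₁
    have e5 : ∀ᶠ i in atTop, ‖xi i - x‖ < ρ - ρ₁ :=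
      hnxlim.eventually_lt_const (by linarith)
    filter_upwards [e1, e2, e3, e4, e5] with i h1 h2 h3 h4 h5
    exact ⟨h1.le, h2.le, h3, h4, h5⟩
  filter_upwards [hP] with i hPi
  obtain ⟨hθ1, hΓθ1, hrilo, hrihi, hxicl⟩ := hPi
  have hθi := hθpos i
  have hri0 : 0 < ri i := by linarith
  -- pointwise bound on the renormalized energy density
  have hE1 : ∀ y ∈ K, |2 / θ i ^ 2 * (Real.sqrt (1 + ‖fderiv ℝ (u i) y‖ ^ 2)
      - Real.cos (θ i)) - (‖(θ i)⁻¹ • fderiv ℝ (u i) y‖ ^ 2 + 1)| ≤ εs i := by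
    intro y hyK
    have hp : ‖fderiv ℝ (u i) y‖ ≤ Γ * θ i :=
      le_trans (le_add_of_nonneg_left (abs_nonneg _)) (hu_bd i y (hKb hyK))
    have hp0 : 0 ≤ ‖fderiv ℝ (u i) y‖ := norm_nonneg _
    have hp1 : ‖fderiv ℝ (u i) y‖ ≤ 1 := hp.trans hΓθ1
    have hwnorm : ‖(θ i)⁻¹ • fderiv ℝ (u i) y‖ = ‖fderiv ℝ (u i) y‖ / θ i := by
      rw [norm_smul, norm_inv, Real.norm_eq_abs, abs_of_pos hθi, inv_mul_eq_div]
    have hsq := aux_sqrt hp0 hp1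
    have hcos := Real.cos_bound (show |θ i| ≤ 1 by rw [abs_of_pos hθi]; exact hθ1)
    have hid : 2 / θ i ^ 2 * (Real.sqrt (1 + ‖fderiv ℝ (u i) y‖ ^ 2) - Real.cos (θ i))
        - ((‖fderiv ℝ (u i) y‖ / θ i) ^ 2 + 1)
        = 2 / θ i ^ 2 * ((Real.sqrt (1 + ‖fderiv ℝ (u i) y‖ ^ 2)
          - (1 + ‖fderiv ℝ (u i) y‖ ^ 2 / 2))
          - (Real.cos (θ i) - (1 - θ i ^ 2 / 2))) := by
      field_simp
      ring
    rw [hwnorm, hid, abs_mul, abs_of_pos (show (0:ℝ) < 2 / θ i ^ 2 by positivity)]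
    have h3 : |Real.sqrt (1 + ‖fderiv ℝ (u i) y‖ ^ 2)
          - (1 + ‖fderiv ℝ (u i) y‖ ^ 2 / 2) - (Real.cos (θ i) - (1 - θ i ^ 2 / 2))|
        ≤ ‖fderiv ℝ (u i) y‖ ^ 4 / 8 + |θ i| ^ 4 * (5 / 96) :=
      (abs_sub _ _).trans (add_le_add hsq hcos)
    have hp4 : ‖fderiv ℝ (u i) y‖ ^ 4 ≤ (Γ * θ i) ^ 4 := pow_le_pow_left₀ hp0 hp 4
    calc 2 / θ i ^ 2 * |Real.sqrt (1 + ‖fderiv ℝ (u i) y‖ ^ 2)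
          - (1 + ‖fderiv ℝ (u i) y‖ ^ 2 / 2) - (Real.cos (θ i) - (1 - θ i ^ 2 / 2))|
        ≤ 2 / θ i ^ 2 * (‖fderiv ℝ (u i) y‖ ^ 4 / 8 + |θ i| ^ 4 * (5 / 96)) :=
        mul_le_mul_of_nonneg_left h3 (by positivity)
    _ ≤ εs i := by
        simp only [hεdef]
        rw [abs_of_pos hθi, div_mul_eq_mul_div, div_le_iff₀ (by positivity : (0:ℝ) < θ i ^ 2)]
        nlinarith [hp4, sq_nonneg (θ i)]
  have hE4gi : ∀ y : EuclideanSpace ℝ (Fin n), |ζ (‖y - xi i‖ / ri i)| ≤ M :=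
    fun y => hζbd _ (div_nonneg (norm_nonneg _) hri0.le)
  have hg4 : ∀ y : EuclideanSpace ℝ (Fin n), |ζ (‖y - x‖ / r)| ≤ M :=
    fun y => hζbd _ (by positivity)
  have hE5 : ∀ y ∈ K, |ζ (‖y - xi i‖ / ri i) - ζ (‖y - x‖ / r)| ≤ Lr * ds i := by
    intro y hyK
    refine (hζlip' _ _).trans (mul_le_mul_of_nonneg_left ?_ hLr0)
    have hyx : ‖y - x‖ ≤ ρ := by
      rw [hKdef, mem_closedBall, dist_eq_norm] at hyK; exact hyK
    have hAB : |‖y - xi i‖ - ‖y - x‖| ≤ ‖xi i - x‖ := by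
      have h := abs_norm_sub_norm_le (y - xi i) (y - x)
      have he : (y - xi i) - (y - x) = x - xi i := by abel
      rw [he, norm_sub_rev x (xi i)] at h
      exact h
    have hst : ‖y - xi i‖ / ri i - ‖y - x‖ / r
        = (‖y - xi i‖ * r - ‖y - x‖ * ri i) / (ri i * r) := by
      field_simp
    rw [hst, abs_div, abs_of_pos (mul_pos hri0 hr0)]
    have hnum : |‖y - xi i‖ * r - ‖y - x‖ * ri i| ≤ ‖xi i - x‖ * r + ρ * |ri i - r| := by
      have hsplit : ‖y - xi i‖ * r - ‖y - x‖ * ri i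
          = (‖y - xi i‖ - ‖y - x‖) * r + ‖y - x‖ * (r - ri i) := by ring
      rw [hsplit]
      refine (abs_add_le _ _).trans ?_
      rw [abs_mul, abs_mul, abs_of_pos hr0]
      have h2' : |‖y - x‖| * |r - ri i| ≤ ρ * |ri i - r| := by
        rw [abs_of_nonneg (norm_nonneg _), abs_sub_comm]
        exact mul_le_mul_of_nonneg_right hyx (abs_nonneg _)
      have h1' := mul_le_mul_of_nonneg_right hAB hr0.le
      linarith
    have ha0 : 0 ≤ ‖xi i - x‖ * r + ρ * |ri i - r| := by positivity
    simp only [hddef]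
    rw [div_le_iff₀ (mul_pos hri0 hr0)]
    have hone : 1 ≤ 2 / r ^ 2 * (ri i * r) := by
      rw [div_mul_eq_mul_div, le_div_iff₀ (by positivity : (0:ℝ) < r ^ 2)]
      nlinarith
    calc |‖y - xi i‖ * r - ‖y - x‖ * ri i|
        ≤ ‖xi i - x‖ * r + ρ * |ri i - r| := hnum
    _ = (‖xi i - x‖ * r + ρ * |ri i - r|) * 1 := (mul_one _).symm
    _ ≤ (‖xi i - x‖ * r + ρ * |ri i - r|) * (2 / r ^ 2 * (ri i * r)) :=
        mul_le_mul_of_nonneg_left hone ha0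
    _ = (‖xi i - x‖ * r + ρ * |ri i - r|) * (2 / r ^ 2) * (ri i * r) := by ring
  -- pointwise estimate of the difference of integrands
  have hptw : ∀ y ∈ K, |fI i y - fT y| ≤ (M * εs i + (Γ ^ 2 + 1) * (Lr * ds i))
      + (2 * Γ * M * ‖(θ i)⁻¹ • fderiv ℝ (u i) y - fderiv ℝ v y‖
        + M * (Γ ^ 2 + 1) * |χi i y - χv y|) := by
    intro y hyK
    have key := fun (ci cv : ℝ) (hci : ci = 0 ∨ ci = 1) (hcv : cv = 0 ∨ cv = 1) =>
      ptwise_bound (ci := ci) (cv := cv)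
      (gvi := ζ (‖y - xi i‖ / ri i)) (gv := ζ (‖y - x‖ / r))
      (Fv := 2 / θ i ^ 2 * (Real.sqrt (1 + ‖fderiv ℝ (u i) y‖ ^ 2) - Real.cos (θ i)))
      (a := ‖(θ i)⁻¹ • fderiv ℝ (u i) y‖) (b := ‖fderiv ℝ v y‖)
      (ng := ‖(θ i)⁻¹ • fderiv ℝ (u i) y - fderiv ℝ v y‖) (M := M) (es := εs i)
      (G := Γ) (Lds := Lr * ds i)
      (hE4gi y) (hg4 y) (hE5 y hyK) (hE1 y hyK) (norm_nonneg _) (norm_nonneg _)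
      (hwK i y hyK) (hDvK y hyK) (abs_norm_sub_norm_le _ _) (norm_nonneg _)
      hM0 hΓ.le (hεnn i) (mul_nonneg hLr0 (hdnn i)) hci hcv
    by_cases hyu : y ∈ {z | 0 < u i z} <;> by_cases hyv : y ∈ Sv
    · have h := key 1 1 (Or.inr rfl) (Or.inr rfl)
      simp only [hfIdef, hfTdef, hχidef, hχvdef, indicator_of_mem hyu,
        indicator_of_mem hyv] at *
      simpa using h
    · have h := key 1 0 (Or.inr rfl) (Or.inl rfl)
      simp only [hfIdef, hfTdef, hχidef, hχvdef, indicator_of_mem hyu,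
        indicator_of_notMem hyv] at *
      simpa using h
    · have h := key 0 1 (Or.inl rfl) (Or.inr rfl)
      simp only [hfIdef, hfTdef, hχidef, hχvdef, indicator_of_notMem hyu,
        indicator_of_mem hyv] at *
      simpa using h
    · have h := key 0 0 (Or.inl rfl) (Or.inl rfl)
      simp only [hfIdef, hfTdef, hχidef, hχvdef, indicator_of_notMem hyu,
        indicator_of_notMem hyv] at *
      simpa using h
  -- integrability of fI i on K
  have hFvbd : ∀ y ∈ K, |ζ (‖y - xi i‖ / ri i) * (2 / θ i ^ 2 *
      (Real.sqrt (1 + ‖fderiv ℝ (u i) y‖ ^ 2) - Real.cos (θ i)))|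
      ≤ M * (εs i + (Γ ^ 2 + 1)) := by
    intro y hy
    have hF := hE1 y hy
    have haG := hwK i y hy
    have ha0 : (0:ℝ) ≤ ‖(θ i)⁻¹ • fderiv ℝ (u i) y‖ := norm_nonneg _
    rw [abs_mul]
    have hFb : |2 / θ i ^ 2 * (Real.sqrt (1 + ‖fderiv ℝ (u i) y‖ ^ 2) - Real.cos (θ i))|
        ≤ εs i + (Γ ^ 2 + 1) := by
      have he : 2 / θ i ^ 2 * (Real.sqrt (1 + ‖fderiv ℝ (u i) y‖ ^ 2) - Real.cos (θ i))
          = (2 / θ i ^ 2 * (Real.sqrt (1 + ‖fderiv ℝ (u i) y‖ ^ 2) - Real.cos (θ i))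
            - (‖(θ i)⁻¹ • fderiv ℝ (u i) y‖ ^ 2 + 1))
            + (‖(θ i)⁻¹ • fderiv ℝ (u i) y‖ ^ 2 + 1) := by ring
      rw [he]
      refine (abs_add_le _ _).trans ?_
      rw [abs_of_nonneg (by positivity : (0:ℝ) ≤ ‖(θ i)⁻¹ • fderiv ℝ (u i) y‖ ^ 2 + 1)]
      nlinarith
    exact mul_le_mul (hE4gi y) hFb (abs_nonneg _) hM0
  have int_fI : IntegrableOn (fI i) K := by
    apply intK (fI i) (M * (εs i + (Γ ^ 2 + 1)))
    · exact (((hcont_gi i).measurable.mul (hmes_F i)).indicator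
        (hSi_open i).measurableSet).aestronglyMeasurable
    · intro y hy
      by_cases hyu : y ∈ {z | 0 < u i z}
      · simp only [hfIdef, indicator_of_mem hyu]
        exact hFvbd y hy
      · simp only [hfIdef, indicator_of_notMem hyu]
        rw [abs_zero]
        exact mul_nonneg hM0 (add_nonneg (hεnn i) (by positivity))
  have int_B : IntegrableOn (fun y => (M * εs i + (Γ ^ 2 + 1) * (Lr * ds i))
      + (2 * Γ * M * ‖(θ i)⁻¹ • fderiv ℝ (u i) y - fderiv ℝ v y‖
        + M * (Γ ^ 2 + 1) * |χi i y - χv y|)) K :=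
    (integrable_const _).add (((int_n i).const_mul _).add ((int_χ i).const_mul _))
  -- rewrite the original sequence term as an integral over K
  have heq1 : (2 / θ i ^ 2) * ∫ y in {y | 0 < u i y} ∩ ball (0:EuclideanSpace ℝ (Fin n)) 1,
      ζ (‖y - xi i‖ / ri i) * (Real.sqrt (1 + ‖fderiv ℝ (u i) y‖ ^ 2) - Real.cos (θ i))
      = ∫ y in K, fI i y := by
    have hm1 : MeasurableSet ({y | 0 < u i y} ∩ ball (0:EuclideanSpace ℝ (Fin n)) 1) :=
      ((hSi_open i).inter isOpen_ball).measurableSet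
    have step1 : (2 / θ i ^ 2) * ∫ y in {y | 0 < u i y} ∩ ball (0:EuclideanSpace ℝ (Fin n)) 1,
        ζ (‖y - xi i‖ / ri i) * (Real.sqrt (1 + ‖fderiv ℝ (u i) y‖ ^ 2) - Real.cos (θ i))
        = ∫ y in {y | 0 < u i y} ∩ ball (0:EuclideanSpace ℝ (Fin n)) 1,
          ζ (‖y - xi i‖ / ri i) * (2 / θ i ^ 2 *
            (Real.sqrt (1 + ‖fderiv ℝ (u i) y‖ ^ 2) - Real.cos (θ i))) := by
      rw [← integral_const_mul]
      exact setIntegral_congr_fun hm1 fun y _ => by ring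
    have step2 : ∫ y in {y | 0 < u i y} ∩ ball (0:EuclideanSpace ℝ (Fin n)) 1,
        ζ (‖y - xi i‖ / ri i) * (2 / θ i ^ 2 *
          (Real.sqrt (1 + ‖fderiv ℝ (u i) y‖ ^ 2) - Real.cos (θ i)))
        = ∫ y in K ∩ {y | 0 < u i y},
          ζ (‖y - xi i‖ / ri i) * (2 / θ i ^ 2 *
            (Real.sqrt (1 + ‖fderiv ℝ (u i) y‖ ^ 2) - Real.cos (θ i))) := by
      refine setIntegral_eq_of_subset_of_ae_diff_eq_zero hm1.nullMeasurableSet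
        (fun y hy => ⟨hy.2, hKb hy.1⟩) (ae_of_all _ fun y hy => ?_)
      obtain ⟨⟨hySi, _⟩, hns⟩ := hy
      have hyK' : y ∉ K := fun h => hns ⟨h, hySi⟩
      rw [hKdef, mem_closedBall, dist_eq_norm, not_le] at hyK'
      have htri : ‖y - x‖ ≤ ‖y - xi i‖ + ‖xi i - x‖ := by
        have h := norm_add_le (y - xi i) (xi i - x)
        simpa using h
      have hfar : ri i < ‖y - xi i‖ := by linarith
      rw [hζ_supp _ ((one_lt_div hri0).mpr hfar), zero_mul]
    have step3 : ∫ y in K, fI i y = ∫ y in K ∩ {y | 0 < u i y},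
        ζ (‖y - xi i‖ / ri i) * (2 / θ i ^ 2 *
          (Real.sqrt (1 + ‖fderiv ℝ (u i) y‖ ^ 2) - Real.cos (θ i))) := by
      simp only [hfIdef]
      exact setIntegral_indicator (hSi_open i).measurableSet
    rw [step1, step2, ← step3]
  -- conclude
  rw [Real.dist_eq, heq1, ← integral_sub int_fI int_fT]
  have hstep1 : |(∫ y in K, (fI i y - fT y))| ≤ ∫ y in K, |fI i y - fT y| := by
    simpa [Real.norm_eq_abs] using
      norm_integral_le_integral_norm (μ := volume.restrict K) (fun y => fI i y - fT y)
  have hstep2 : (∫ y in K, |fI i y - fT y|)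
      ≤ ∫ y in K, ((M * εs i + (Γ ^ 2 + 1) * (Lr * ds i))
      + (2 * Γ * M * ‖(θ i)⁻¹ • fderiv ℝ (u i) y - fderiv ℝ v y‖
        + M * (Γ ^ 2 + 1) * |χi i y - χv y|)) :=
    setIntegral_mono_on ((int_fI.sub int_fT).abs) int_B hKm hptw
  have hstep3 : (∫ y in K, ((M * εs i + (Γ ^ 2 + 1) * (Lr * ds i))
      + (2 * Γ * M * ‖(θ i)⁻¹ • fderiv ℝ (u i) y - fderiv ℝ v y‖
        + M * (Γ ^ 2 + 1) * |χi i y - χv y|))) = bnd i := by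
    have ig1 : Integrable (fun y => 2 * Γ * M * ‖(θ i)⁻¹ • fderiv ℝ (u i) y - fderiv ℝ v y‖)
        (volume.restrict K) := (int_n i).const_mul _
    have ig2 : Integrable (fun y => M * (Γ ^ 2 + 1) * |χi i y - χv y|)
        (volume.restrict K) := (int_χ i).const_mul _
    have ig12 : Integrable (fun y => 2 * Γ * M * ‖(θ i)⁻¹ • fderiv ℝ (u i) y - fderiv ℝ v y‖
        + M * (Γ ^ 2 + 1) * |χi i y - χv y|) (volume.restrict K) := ig1.add ig2
    rw [integral_add (integrable_const _) ig12,
      integral_add ig1 ig2, integral_const, integral_const_mul, integral_const_mul]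
    simp only [hbnddef, hI1def, hI2def, measureReal_def, Measure.restrict_apply_univ, smul_eq_mul, hmKdef]
    ring
  exact hstep1.trans (hstep2.trans_eq hstep3)
end
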